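/- Let m₀ ∈ ℂ[Y] be nonzero and let y ∈ ℂ be a root of m₀ of multiplicity μ ≥ 1. Let w ∈ ℂ[Y] be a polynomial divisible by g := gcd(m₀, m₀′). Then g has y as a root of multiplicity exactly μ − 1, and (w/g)(y) / (m₀′/g)(y) = w^{(μ−1)}(y) / m₀^{(μ)}(y), where both denominators are nonzero. -/

import Mathlib

/-!
Write `m₀ = (X - y)^μ q` with `q(y) ≠ 0`. In characteristic zero `m₀′` vanishes at `y` to order
exactly `μ - 1`, hence so does `g = gcd(m₀, m₀′)`: `g = (X - y)^(μ-1) h` with `h(y) ≠ 0`.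
Differentiating `μ - 1` times and evaluating at `y` kills every Leibniz term except the one
that differentiates `(X - y)^(μ-1)` completely, so `(g c)^{(μ-1)}(y) = (μ-1)! h(y) c(y)` for
every `c`. Applied to `c = w/g` and to `c = m₀′/g` (where `(g c)^{(μ-1)} = m₀^{(μ)}`), both
sides of the identity become `(μ-1)! h(y) (w/g)(y) (m₀′/g)(y)`.
-/

open Polynomial

attribute [local instance] Classical.propDecidable

namespace Polynomial

section CommRing

variable {R : Type*} [CommRing R]

open Finset in
theorem eval_iterate_derivative_X_sub_C_pow_mul (k : ℕ) (t : R) (c : R[X]) :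
    eval t (derivative^[k] ((X - C t) ^ k * c)) = k.factorial * eval t c := by
  rw [iterate_derivative_mul, eval_finsetSum, sum_eq_single_of_mem 0 (mem_range.mpr k.succ_pos)]
  · rw [k.choose_zero_right, one_smul, eval_mul, k.sub_zero, iterate_derivative_X_sub_pow_self,
      eval_natCast, Function.iterate_zero_apply]
  · intro i hi hi0
    rw [iterate_derivative_X_sub_pow, eval_smul, eval_mul, eval_smul, eval_pow,
      Nat.sub_sub_self (mem_range_succ_iff.mp hi), eval_sub, eval_X, eval_C, sub_self,
      zero_pow hi0, smul_zero, zero_mul, smul_zero]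

theorem eval_iterate_derivative_rootMultiplicity_mul (g c : R[X]) (t : R) :
    eval t (derivative^[g.rootMultiplicity t] (g * c)) =
      (g.rootMultiplicity t).factorial * eval t (g /ₘ (X - C t) ^ g.rootMultiplicity t) *
        eval t c := by
  set k := g.rootMultiplicity t
  conv_lhs => rw [← pow_mul_divByMonic_rootMultiplicity_eq g t, mul_assoc]
  rw [eval_iterate_derivative_X_sub_C_pow_mul, eval_mul, mul_assoc]

end CommRing

variable {K : Type*} [Field K] [CharZero K]

theorem derivative_ne_zero_of_isRoot {p : K[X]} {t : K} (hp : p ≠ 0) (ht : p.IsRoot t) :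
    derivative p ≠ 0 := by
  intro hd
  rw [eq_C_of_derivative_eq_zero hd] at hp ht
  rw [IsRoot, eval_C] at ht
  exact hp (by rw [ht, C_0])

theorem rootMultiplicity_gcd_derivative {p : K[X]} (hp : p ≠ 0) (t : K) :
    rootMultiplicity t (EuclideanDomain.gcd p (derivative p)) = rootMultiplicity t p - 1 := by
  refine le_antisymm ?_ ?_
  · by_cases ht : p.IsRoot t
    · rw [← derivative_rootMultiplicity_of_root ht]
      exact rootMultiplicity_le_rootMultiplicity_of_dvd (derivative_ne_zero_of_isRoot hp ht)
        (EuclideanDomain.gcd_dvd_right _ _) t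
    · exact (rootMultiplicity_le_rootMultiplicity_of_dvd hp
        (EuclideanDomain.gcd_dvd_left _ _) t).trans (by simp [rootMultiplicity_eq_zero ht])
  · have hg : EuclideanDomain.gcd p (derivative p) ≠ 0 :=
      fun h ↦ hp (EuclideanDomain.gcd_eq_zero_iff.mp h).1
    rw [le_rootMultiplicity_iff hg]
    exact EuclideanDomain.dvd_gcd
      ((pow_dvd_pow _ (Nat.sub_le _ _)).trans (pow_rootMultiplicity_dvd p t))
      (pow_sub_one_dvd_derivative_of_pow_dvd (pow_rootMultiplicity_dvd p t))

end Polynomial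

theorem stmt11_general (m₀ w : Polynomial ℂ) (y : ℂ)
    (μ : ℕ) (hμ : μ = rootMultiplicity y m₀) (hμ1 : 1 ≤ μ)
    (g : Polynomial ℂ) (hg : g = EuclideanDomain.gcd m₀ (derivative m₀))
    (hw : g ∣ w) :
    rootMultiplicity y g = μ - 1 ∧
    eval y (derivative^[μ] m₀) ≠ 0 ∧
    eval y (derivative m₀ / g) ≠ 0 ∧
    eval y (w / g) * eval y (derivative^[μ] m₀) =
      eval y (derivative^[μ - 1] w) * eval y (derivative m₀ / g) := by
  have hm : m₀ ≠ 0 := (rootMultiplicity_pos'.mp (hμ ▸ hμ1)).1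
  have hg0 : g ≠ 0 := hg ▸ fun h ↦ hm (EuclideanDomain.gcd_eq_zero_iff.mp h).1
  have hmult : rootMultiplicity y g = μ - 1 := hg ▸ hμ ▸ rootMultiplicity_gcd_derivative hm y
  obtain ⟨a, ha⟩ : g ∣ derivative m₀ := hg ▸ EuclideanDomain.gcd_dvd_right _ _
  obtain ⟨b, rfl⟩ := hw
  have hiter : derivative^[μ] m₀ = derivative^[μ - 1] (g * a) := by
    rw [← ha, ← Function.iterate_succ_apply, Nat.succ_eq_add_one, Nat.sub_add_cancel hμ1]
  have hne : eval y (derivative^[μ] m₀) ≠ 0 := by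
    rw [hμ, eval_iterate_derivative_rootMultiplicity]
    exact smul_ne_zero (Nat.factorial_ne_zero _)
      (eval_divByMonic_pow_rootMultiplicity_ne_zero y hm)
  have hleibniz (c : ℂ[X]) : eval y (derivative^[μ - 1] (g * c)) =
      (μ - 1).factorial * eval y (g /ₘ (X - C y) ^ (μ - 1)) * eval y c := by
    rw [← hmult, eval_iterate_derivative_rootMultiplicity_mul]
  rw [ha, mul_div_cancel_left₀ _ hg0, mul_div_cancel_left₀ _ hg0]
  simp only [hiter, hleibniz] at hne ⊢
  exact ⟨hmult, hne, right_ne_zero_of_mul hne, by ring⟩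

/-- Let `m₀ ∈ ℂ[Y]` be nonzero, `y` a root of `m₀` of multiplicity
`μ ≥ 1`, and `w ∈ ℂ[Y]` divisible by `g = gcd(m₀, m₀′)`.  Then `g` has `y` as a root of
multiplicity exactly `μ - 1`, the values `m₀^{(μ)}(y)` and `(m₀′/g)(y)` are nonzero, and
`(w/g)(y) / (m₀′/g)(y) = w^{(μ-1)}(y) / m₀^{(μ)}(y)` (stated with denominators
cleared). -/
theorem stmt11 (m₀ w : Polynomial ℂ) (hm : m₀ ≠ 0) (y : ℂ)
    (μ : ℕ) (hμ : μ = rootMultiplicity y m₀) (hμ1 : 1 ≤ μ)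
    (g : Polynomial ℂ) (hg : g = EuclideanDomain.gcd m₀ (derivative m₀))
    (hw : g ∣ w) :
    rootMultiplicity y g = μ - 1 ∧
    eval y (derivative^[μ] m₀) ≠ 0 ∧
    eval y (derivative m₀ / g) ≠ 0 ∧
    eval y (w / g) * eval y (derivative^[μ] m₀) =
      eval y (derivative^[μ - 1] w) * eval y (derivative m₀ / g) :=
  stmt11_general m₀ w y μ hμ hμ1 g hg hw
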